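/- Fix n ∈ ℕ and real parameters a, b, α, β, s. Assume (a−b+1|q)_n ≠ 0, (β+1|q)_n (a+b+α+1|q)_n ≠ 0 and (α+1|q)_n (−a−b+β+1|q)_n ≠ 0. Then (β+1|q)_n (a+b+α+1|q)_n · Σ_{k=0}^{n} [(−n|q)_k (α+β+n+1|q)_k (a−s|q)_k (a+s+1|q)_k] / [(1|q)_k (a−b+1|q)_k (β+1|q)_k (a+b+α+1|q)_k] = (α+1|q)_n (−a−b+β+1|q)_n · Σ_{k=0}^{n} [(−n|q)_k (α+β+n+1|q)_k (−b−s|q)_k (−b+s+1|q)_k] / [(1|q)_k (a−b+1|q)_k (α+1|q)_k (−a−b+β+1|q)_k]. Equivalently, the q-Racah polynomial u_n^{α,β}(x(s),a,b)_q also equals ((a−b+1|q)_n (α+1|q)_n (−a−b+β+1|q)_n / [n]_q!) times the second sum. -/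

import Mathlib

/-!
Both sums are the two sides of Sears' transformation of a terminating balanced `₄φ₃` series in
symmetric notation. The argument works for any odd function `E` satisfying the three-term
relation of the sine, `E p * E (r + s) = E (p + s) * E r + E s * E (p - r)`, and `s ↦ [s]_q` is
one. A contiguous relation derived from the three-term relation gives the q-Pfaff–Saalschütz
summation by induction on its length. Expanding each term of one side of Sears' identity as a
Saalschütz sum and exchanging the two summations produces the other side. All of this is done
with denominators cleared, so that the non-vanishing hypotheses enter only when dividing back.
-/

open Finset

/-- The symmetric q-number `[s]_q = (q^{s/2} - q^{-s/2})/(q^{1/2} - q^{-1/2})`. -/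
noncomputable def qnum (q s : ℝ) : ℝ :=
  (q ^ (s / 2) - q ^ (-s / 2)) / (q ^ ((1 : ℝ) / 2) - q ^ (-(1 : ℝ) / 2))

/-- The symmetric q-factorial `[n]_q! = ∏_{m=1}^n [m]_q`. -/
noncomputable def qfact (q : ℝ) (n : ℕ) : ℝ :=
  ∏ m ∈ Finset.range n, qnum q ((m : ℝ) + 1)

/-- The symmetric q-Pochhammer symbol `(a|q)_k = ∏_{m=0}^{k-1} [a+m]_q`. -/
noncomputable def qpoch (q a : ℝ) (k : ℕ) : ℝ :=
  ∏ m ∈ Finset.range k, qnum q (a + (m : ℝ))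

/-- The q-Racah polynomial `u_n^{α,β}(x(s),a,b)_q` on the lattice `x(s)=[s]_q[s+1]_q`. -/
noncomputable def racahU (q a b α β : ℝ) (n : ℕ) (s : ℝ) : ℝ :=
  qpoch q (a - b + 1) n * qpoch q (β + 1) n * qpoch q (a + b + α + 1) n / qfact q n *
    ∑ k ∈ Finset.range (n + 1),
      qpoch q (-(n : ℝ)) k * qpoch q (α + β + (n : ℝ) + 1) k * qpoch q (a - s) k *
          qpoch q (a + s + 1) k /
        (qpoch q 1 k * qpoch q (a - b + 1) k * qpoch q (β + 1) k *
          qpoch q (a + b + α + 1) k)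

/-- The alternative q-Racah polynomial `ũ_n^{α,β}(x(s),a,b)_q`. -/
noncomputable def racahUt (q a b α β : ℝ) (n : ℕ) (s : ℝ) : ℝ :=
  qpoch q (a - b + 1) n * qpoch q (2 * a - β + 1) n * qpoch q (a - b - α + 1) n / qfact q n *
    ∑ k ∈ Finset.range (n + 1),
      qpoch q (-(n : ℝ)) k * qpoch q (2 * a - 2 * b - α - β + (n : ℝ) + 1) k *
          qpoch q (a - s) k * qpoch q (a + s + 1) k /
        (qpoch q 1 k * qpoch q (a - b + 1) k * qpoch q (2 * a - β + 1) k *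
          qpoch q (a - b - α + 1) k)

/-- `σ(s) = [s-a]_q [s+b]_q [s+a-β]_q [b+α-s]_q`. -/
noncomputable def racahSigma (q a b α β s : ℝ) : ℝ :=
  qnum q (s - a) * qnum q (s + b) * qnum q (s + a - β) * qnum q (b + α - s)

/-- `σ(-s-1) = [s+a+1]_q [b-s-1]_q [s-a+β+1]_q [b+α+s+1]_q`. -/
noncomputable def racahSigmaM (q a b α β s : ℝ) : ℝ :=
  qnum q (s + a + 1) * qnum q (b - s - 1) * qnum q (s - a + β + 1) * qnum q (b + α + s + 1)

/-- `σ̃(s) = [s-a]_q [s+b]_q [s-a+β]_q [b+α+s]_q`. -/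
noncomputable def racahSigmaT (q a b α β s : ℝ) : ℝ :=
  qnum q (s - a) * qnum q (s + b) * qnum q (s - a + β) * qnum q (b + α + s)

/-- `σ̃(-s-1) = [s+a+1]_q [b-s-1]_q [s+a-β+1]_q [b+α-s-1]_q`. -/
noncomputable def racahSigmaTM (q a b α β s : ℝ) : ℝ :=
  qnum q (s + a + 1) * qnum q (b - s - 1) * qnum q (s + a - β + 1) * qnum q (b + α - s - 1)

/-- `τ_n(s)` for the q-Racah polynomials. -/
noncomputable def racahTau (q a b α β : ℝ) (n : ℕ) (s : ℝ) : ℝ :=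
  -qnum q (α + β + 2 * (n : ℝ) + 2) * qnum q (s + (n : ℝ) / 2) * qnum q (s + (n : ℝ) / 2 + 1) +
    qnum q (a + (n : ℝ) / 2 + 1) * qnum q (b - (n : ℝ) / 2 - 1) *
      qnum q (β + (n : ℝ) / 2 + 1 - a) * qnum q (b + α + (n : ℝ) / 2 + 1) -
    qnum q (a + (n : ℝ) / 2) * qnum q (b - (n : ℝ) / 2) * qnum q (β + (n : ℝ) / 2 - a) *
      qnum q (b + α + (n : ℝ) / 2)

/-- Examples: `sin`, `sinh`, `id`, and `qnum q` for `0 < q`. -/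
structure IsSineLike {K : Type*} [Field K] (E : ℝ → K) : Prop where
  neg : ∀ u, E (-u) = -E u
  mul_add : ∀ p r s, E p * E (r + s) = E (p + s) * E r + E s * E (p - r)

noncomputable def poch {K : Type*} [Field K] (E : ℝ → K) (a : ℝ) (k : ℕ) : K :=
  ∏ m ∈ range k, E (a + m)

section SineLike

variable {K : Type*} [Field K] {E : ℝ → K}

theorem IsSineLike.map_zero (hE : IsSineLike E) : E 0 = 0 := by
  have h := hE.mul_add 0 0 0
  simp only [add_zero, sub_zero] at h
  exact pow_eq_zero_iff (n := 2) two_ne_zero |>.mp (by linear_combination -h)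

@[simp]
theorem poch_zero (a : ℝ) : poch E a 0 = 1 := by simp [poch]

theorem poch_succ (a : ℝ) (k : ℕ) : poch E a (k + 1) = poch E a k * E (a + k) := by
  simp [poch, prod_range_succ]

theorem poch_add (a : ℝ) (j l : ℕ) : poch E a (j + l) = poch E a j * poch E (a + j) l := by
  simp only [poch, prod_range_add, Nat.cast_add, add_assoc]

theorem poch_succ' (a : ℝ) (k : ℕ) : poch E a (k + 1) = E a * poch E (a + 1) k := by
  rw [add_comm k, poch_add]
  simp [poch]

theorem poch_reflect (hE : IsSineLike E) (a : ℝ) (k : ℕ) :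
    poch E a k = (-1) ^ k * poch E (-a - k + 1) k := by
  rw [poch, poch, ← prod_range_reflect, pow_eq_prod_const, ← prod_mul_distrib]
  refine prod_congr rfl fun m hm => ?_
  have hmk : m + 1 ≤ k := mem_range.mp hm
  rw [Nat.cast_sub (by omega), Nat.cast_sub (by omega), Nat.cast_one,
    show a + ((k : ℝ) - 1 - m) = -(-a - k + 1 + m) by ring, hE.neg]
  ring

theorem poch_neg_natCast_of_lt (hE : IsSineLike E) {k j : ℕ} (h : k < j) :
    poch E (-k) j = 0 :=
  prod_eq_zero (mem_range.mpr h) (by simp [hE.map_zero])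

theorem poch_one_add_natCast_ne_zero (hE1 : ∀ m : ℕ, E (m + 1) ≠ 0) (l j : ℕ) :
    poch E (1 + l) j ≠ 0 :=
  prod_ne_zero_iff.mpr fun m _ => by
    simpa [show (1 : ℝ) + l + m = ((l + m : ℕ) : ℝ) + 1 by push_cast; ring] using hE1 (l + m)

theorem poch_one_ne_zero (hE1 : ∀ m : ℕ, E (m + 1) ≠ 0) (k : ℕ) : poch E 1 k ≠ 0 := by
  simpa using poch_one_add_natCast_ne_zero hE1 0 k

end SineLike

section Saalschutz

variable {K : Type*} [Field K] {E : ℝ → K}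

/-- The `j`-th term of the terminating q-Saalschütz sum `₃φ₂(-k, A, B; C, A + B - C + 1 - k)`,
multiplied by `(1)_k (C)_k (A + B - C + 1 - k)_k`. -/
noncomputable def saalschutzTerm (E : ℝ → K) (k : ℕ) (A B C : ℝ) (j : ℕ) : K :=
  poch E (-k) j * poch E A j * poch E B j *
    (poch E (1 + j) (k - j) * poch E (C + j) (k - j) * poch E (A + B - C + 1 - k + j) (k - j))

theorem saalschutzTerm_of_lt (hE : IsSineLike E) {k j : ℕ} (h : k < j) (A B C : ℝ) :
    saalschutzTerm E k A B C j = 0 := by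
  simp only [saalschutzTerm, poch_neg_natCast_of_lt hE h, zero_mul]

theorem saalschutzTerm_succ_zero (k : ℕ) (A B C : ℝ) :
    saalschutzTerm E (k + 1) A B C 0 =
      E (k + 1) * E (C + k) * E (A + B - C - k) * saalschutzTerm E k A B C 0 := by
  simp only [saalschutzTerm, poch_zero, Nat.cast_zero, add_zero, Nat.sub_zero, Nat.cast_add,
    Nat.cast_one, one_mul]
  rw [poch_succ 1 k, poch_succ C k, show A + B - C + 1 - (k + 1) = A + B - C - k by ring,
    poch_succ' (A + B - C - k) k, show A + B - C - k + 1 = A + B - C + 1 - k by ring, add_comm 1]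
  ring

theorem saalschutzTerm_succ_succ (hE : IsSineLike E) {k j : ℕ} (hj : j ≤ k) (A B C : ℝ) :
    saalschutzTerm E (k + 1) A B C (j + 1) =
      E (k + 1) * E (C + k) * E (A + B - C - k) * saalschutzTerm E k A B C (j + 1) -
        E (k + 1) * E A * E B * saalschutzTerm E k (A + 1) (B + 1) (C + 1) j := by
  obtain rfl | hlt := eq_or_lt_of_le hj
  · rw [saalschutzTerm_of_lt hE (Nat.lt_succ_self j)]
    simp only [saalschutzTerm, Nat.sub_self, poch_zero, mul_one]
    push_cast
    rw [poch_succ' A j, poch_succ' B j, poch_succ' (-((j : ℝ) + 1)) j, hE.neg,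
      show -((j : ℝ) + 1) + 1 = -j by ring]
    ring
  obtain ⟨r, rfl⟩ : ∃ r, k = j + r + 1 := ⟨k - j - 1, by omega⟩
  simp only [saalschutzTerm, show j + r + 1 + 1 - (j + 1) = r + 1 by omega,
    show j + r + 1 - (j + 1) = r by omega, show j + r + 1 - j = r + 1 by omega]
  push_cast
  rw [poch_succ' (-((j : ℝ) + r + 1 + 1)) j, poch_succ (-((j : ℝ) + r + 1)) j, poch_succ' A j,
    poch_succ' B j, poch_succ (1 + ((j : ℝ) + 1)) r, poch_succ (C + ((j : ℝ) + 1)) r,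
    poch_succ' (A + B - C + 1 - ((j : ℝ) + r + 1 + 1) + (j + 1)) r, poch_succ' (1 + (j : ℝ)) r,
    poch_succ (C + 1 + (j : ℝ)) r,
    poch_succ (A + 1 + (B + 1) - (C + 1) + 1 - ((j : ℝ) + r + 1) + j) r]
  have key := hE.mul_add (A + B - C - j - r - 1) (-j - r - 2) (j + 1)
  linear_combination (norm := ring_nf) (-(poch E (-((j : ℝ) + r + 1)) j * E A * poch E (A + 1) j *
    E B * poch E (B + 1) j * poch E (1 + ((j : ℝ) + 1)) r * poch E (C + ((j : ℝ) + 1)) r *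
    poch E (A + B - C + 1 - r) r * E (j + r + 2) * E (C + j + r + 1))) * key

theorem sum_saalschutzTerm (hE : IsSineLike E) (k : ℕ) (A B C : ℝ) :
    ∑ j ∈ range (k + 1), saalschutzTerm E k A B C j =
      (-1) ^ k * (poch E 1 k * poch E (C - A) k * poch E (C - B) k) := by
  induction k generalizing A B C with
  | zero => simp [saalschutzTerm]
  | succ k ih =>
    have shift : ∑ j ∈ range (k + 1), saalschutzTerm E k A B C (j + 1) =
        ∑ j ∈ range (k + 1), saalschutzTerm E k A B C j - saalschutzTerm E k A B C 0 := by
      rw [eq_sub_iff_add_eq, ← sum_range_succ' (saalschutzTerm E k A B C), sum_range_succ,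
        saalschutzTerm_of_lt hE (Nat.lt_succ_self k), add_zero]
    rw [sum_range_succ', sum_congr rfl fun j hj =>
      saalschutzTerm_succ_succ hE (Nat.lt_succ_iff.mp (mem_range.mp hj)) A B C,
      sum_sub_distrib, ← mul_sum, ← mul_sum, shift, saalschutzTerm_succ_zero, ih, ih,
      poch_succ 1 k, poch_succ (C - A) k, poch_succ (C - B) k,
      show C + 1 - (A + 1) = C - A by ring, show C + 1 - (B + 1) = C - B by ring]
    have key := hE.mul_add A (A + B - C - k) (C + k - A)
    rw [show A + B - C - k + (C + k - A) = B by ring, show A + (C + k - A) = C + k by ring,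
      show C + k - A = C - A + k by ring, show A - (A + B - C - k) = C - B + k by ring] at key
    linear_combination (norm := ring_nf)
      (-((-1) ^ k) * poch E 1 k * poch E (C - A) k * poch E (C - B) k * E (k + 1)) * key

end Saalschutz

section Sears

variable {K : Type*} [Field K] {E : ℝ → K}

noncomputable def searsTerm (E : ℝ → K) (n : ℕ) (w x y d v : ℝ) (k : ℕ) : K :=
  poch E (-n) k * poch E w k * poch E x k * poch E y k *
    (poch E (1 + k) (n - k) * poch E (d + k) (n - k) * poch E (v + k) (n - k) *
      poch E (w + x + y + 1 - n - d - v + k) (n - k))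

/-- Summing over `j` evaluates an inner Saalschütz sum and gives the `k`-th term of the transformed
side of Sears' identity; summing over `k` gives the `j`-th term of the original side. -/
noncomputable def searsKernel (E : ℝ → K) (n : ℕ) (w x y d v : ℝ) (k j : ℕ) : K :=
  poch E (-n) k * poch E w k *
      (poch E (1 + k) (n - k) * poch E (d + k) (n - k) * poch E (w + 1 - n - v + k) (n - k) *
        poch E (d + v - x - y + k) (n - k)) *
    ((-1) ^ k * (poch E 1 k)⁻¹ * saalschutzTerm E k x y d j)

theorem searsKernel_of_lt (hE : IsSineLike E) (n : ℕ) (w x y d v : ℝ) {k j : ℕ} (h : k < j) :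
    searsKernel E n w x y d v k j = 0 := by
  simp [searsKernel, saalschutzTerm_of_lt hE h]

theorem searsKernel_add (hE : IsSineLike E) (hE1 : ∀ m : ℕ, E (m + 1) ≠ 0) {n j l : ℕ}
    (hjl : j + l ≤ n) (w x y d v : ℝ) :
    searsKernel E n w x y d v (j + l) j =
      poch E (-n) j * poch E w j * poch E x j * poch E y j *
          (poch E (1 + j) (n - j) * poch E (d + j) (n - j)) *
        ((poch E 1 (n - j))⁻¹ *
          saalschutzTerm E (n - j) (w + j) (d - x - y) (w + 1 - n - v + j) l) := by
  obtain ⟨r, rfl⟩ : ∃ r, n = j + l + r := ⟨n - j - l, by omega⟩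
  simp only [searsKernel, saalschutzTerm]
  rw [show j + l + r - (j + l) = r by omega, show j + l + r - j = l + r by omega,
    show j + l - j = l by omega, show (l + r) - l = r by omega]
  have hc : poch E (-((j + l : ℕ) : ℝ)) j = (-1) ^ j * poch E (1 + l) j := by
    rw [poch_reflect hE]
    congr 2
    push_cast
    ring
  have he : poch E (x + y - d + 1 - ((j + l : ℕ) : ℝ) + j) l =
      (-1) ^ l * poch E (d - x - y) l := by
    rw [poch_reflect hE]
    congr 2
    push_cast
    ring
  have hd : poch E 1 (j + l) = poch E 1 l * poch E (1 + l) j := by rw [add_comm, poch_add]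
  rw [poch_add _ j l, poch_add w j l, hc, hd, he, poch_add _ l r,
    poch_add (d + j) l r, poch_add 1 l r]
  have h1 := poch_one_ne_zero hE1 l
  have h2 := poch_one_add_natCast_ne_zero hE1 l j
  have h3 := poch_one_add_natCast_ne_zero hE1 l r
  have hp : ∀ m : ℕ, (-1 : K) ^ (m * 2) = 1 := fun m => Even.neg_one_pow ⟨m, by ring⟩
  field_simp
  push_cast
  ring_nf
  simp only [hp, mul_one]

theorem searsTerm_eq_sum_searsKernel (hE : IsSineLike E) (hE1 : ∀ m : ℕ, E (m + 1) ≠ 0)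
    {n k : ℕ} (hk : k ≤ n) (w x y d v : ℝ) :
    searsTerm E n w (d - x) (d - y) d (w + 1 - n - v) k =
      ∑ j ∈ range (n + 1), searsKernel E n w x y d v k j := by
  rw [← sum_range_add_sum_Ico _ (Nat.succ_le_succ hk),
    sum_eq_zero (s := Ico _ _) fun j hj => searsKernel_of_lt hE n w x y d v
      (Nat.succ_le_iff.mp (mem_Ico.mp hj).1), add_zero]
  simp only [searsKernel, ← mul_sum]
  rw [sum_saalschutzTerm hE k x y d, searsTerm,
    show w + (d - x) + (d - y) + 1 - n - d - (w + 1 - n - v) + k = d + v - x - y + k by ring]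
  have h1 := poch_one_ne_zero hE1 k
  have hsign : (-1 : K) ^ k * (-1) ^ k = 1 := by rw [← pow_add, ← two_mul, pow_mul]; simp
  field_simp
  linear_combination (-(poch E (-n) k * poch E w k * (poch E (1 + k) (n - k) *
    poch E (d + k) (n - k) * poch E (w + 1 - n - v + k) (n - k) *
    poch E (d + v - x - y + k) (n - k)) * (poch E (d - x) k * poch E (d - y) k))) * hsign

theorem sum_searsKernel_eq_searsTerm (hE : IsSineLike E) (hE1 : ∀ m : ℕ, E (m + 1) ≠ 0)
    {n j : ℕ} (hj : j ≤ n) (w x y d v : ℝ) :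
    ∑ k ∈ range (n + 1), searsKernel E n w x y d v k j = searsTerm E n w x y d v j := by
  rw [range_eq_Ico, ← sum_Ico_consecutive _ (Nat.zero_le j) (by omega : j ≤ n + 1),
    sum_eq_zero (s := Ico 0 j) fun k hk => searsKernel_of_lt hE n w x y d v (mem_Ico.mp hk).2,
    zero_add, sum_Ico_eq_sum_range, sum_congr rfl fun l hl => searsKernel_add hE hE1
      (by have := mem_range.mp hl; omega) w x y d v,
    ← mul_sum, ← mul_sum, show n + 1 - j = n - j + 1 by omega,
    sum_saalschutzTerm hE (n - j) (w + j) (d - x - y) (w + 1 - n - v + j),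
    show w + 1 - n - v + j - (w + j) = 1 - n - v by ring,
    show w + 1 - n - v + j - (d - x - y) = w + x + y + 1 - n - d - v + j by ring,
    poch_reflect hE (1 - n - v) (n - j),
    show -(1 - n - v) - ((n - j : ℕ) : ℝ) + 1 = v + j by rw [Nat.cast_sub hj]; ring, searsTerm]
  have h1 := poch_one_ne_zero hE1 (n - j)
  have hsign : (-1 : K) ^ (n - j) * (-1) ^ (n - j) = 1 := by
    rw [← pow_add, ← two_mul, pow_mul]; simp
  field_simp
  linear_combination (poch E (-n) j * poch E w j * poch E x j * poch E y j *
    (poch E (1 + j) (n - j) * poch E (d + j) (n - j)) * (poch E (v + j) (n - j) *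
    poch E (w + x + y + 1 - n - d - v + j) (n - j))) * hsign

theorem sum_searsTerm_transform (hE : IsSineLike E) (hE1 : ∀ m : ℕ, E (m + 1) ≠ 0) (n : ℕ)
    (w x y d v : ℝ) :
    ∑ k ∈ range (n + 1), searsTerm E n w x y d v k =
      ∑ k ∈ range (n + 1), searsTerm E n w (d - x) (d - y) d (w + 1 - n - v) k := by
  rw [sum_congr rfl fun k hk => searsTerm_eq_sum_searsKernel hE hE1
      (Nat.lt_succ_iff.mp (mem_range.mp hk)) w x y d v, sum_comm]
  exact sum_congr rfl fun j hj =>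
    (sum_searsKernel_eq_searsTerm hE hE1 (Nat.lt_succ_iff.mp (mem_range.mp hj)) w x y d v).symm

noncomputable def searsSeries (E : ℝ → K) (n : ℕ) (w x y d v f : ℝ) : K :=
  ∑ k ∈ range (n + 1),
    poch E (-n) k * poch E w k * poch E x k * poch E y k /
      (poch E 1 k * poch E d k * poch E v k * poch E f k)

theorem searsSeries_comm (n : ℕ) (w x y d v f : ℝ) :
    searsSeries E n w x y d v f = searsSeries E n w y x d v f := by
  simp only [searsSeries, mul_right_comm _ (poch E x _)]

theorem poch_ne_zero_of_le {a : ℝ} {n k : ℕ} (h : poch E a n ≠ 0) (hk : k ≤ n) :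
    poch E a k ≠ 0 := by
  obtain ⟨l, rfl⟩ := Nat.exists_eq_add_of_le hk
  rw [poch_add] at h
  exact left_ne_zero_of_mul h

theorem searsTerm_eq (hE1 : ∀ m : ℕ, E (m + 1) ≠ 0) {n k : ℕ} (hk : k ≤ n)
    {w x y d v f : ℝ} (hbal : d + v + f = w + x + y + 1 - n) (hd : poch E d n ≠ 0)
    (hv : poch E v n ≠ 0) (hf : poch E f n ≠ 0) :
    searsTerm E n w x y d v k =
      poch E 1 n * poch E d n * poch E v n * poch E f n *
        (poch E (-n) k * poch E w k * poch E x k * poch E y k /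
          (poch E 1 k * poch E d k * poch E v k * poch E f k)) := by
  have h1 := poch_one_ne_zero hE1 k
  have hd' := poch_ne_zero_of_le hd hk
  have hv' := poch_ne_zero_of_le hv hk
  have hf' := poch_ne_zero_of_le hf hk
  obtain ⟨r, rfl⟩ := Nat.exists_eq_add_of_le hk
  rw [searsTerm, add_tsub_cancel_left, show w + x + y + 1 - (k + r : ℕ) - d - v = f by
    push_cast at hbal ⊢; linarith, poch_add 1 k r, poch_add d k r, poch_add v k r, poch_add f k r]
  field_simp

theorem searsSeries_transform (hE : IsSineLike E) (hE1 : ∀ m : ℕ, E (m + 1) ≠ 0) (n : ℕ)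
    {w x y d v f v' f' : ℝ} (hbal : d + v + f = w + x + y + 1 - n) (hv' : v' = w + 1 - n - v)
    (hf' : f' = d + v - x - y) (hd : poch E d n ≠ 0) (hv : poch E v n ≠ 0)
    (hf : poch E f n ≠ 0) (hv'0 : poch E v' n ≠ 0) (hf'0 : poch E f' n ≠ 0) :
    poch E v n * poch E f n * searsSeries E n w x y d v f =
      poch E v' n * poch E f' n * searsSeries E n w (d - x) (d - y) d v' f' := by
  have hbal' : d + v' + f' = w + (d - x) + (d - y) + 1 - n := by rw [hv', hf']; ring
  refine mul_left_cancel₀ (mul_ne_zero (poch_one_ne_zero hE1 n) hd) ?_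
  have key := sum_searsTerm_transform hE hE1 n w x y d v
  rw [← hv'] at key
  simp only [searsSeries, mul_sum, ← mul_assoc]
  rw [sum_congr rfl fun k hk => (searsTerm_eq hE1 (Nat.lt_succ_iff.mp (mem_range.mp hk)) hbal
    hd hv hf).symm, key, sum_congr rfl fun k hk => searsTerm_eq hE1
    (Nat.lt_succ_iff.mp (mem_range.mp hk)) hbal' hd hv'0 hf'0]

end Sears

section QNumber

theorem qpoch_eq_poch_qnum (q : ℝ) : qpoch q = poch (qnum q) := rfl

variable {q : ℝ}

theorem isSineLike_qnum (hq : 0 < q) : IsSineLike (qnum q) where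
  neg u := by
    simp only [qnum, neg_neg, neg_div, ← neg_sub (q ^ (u / 2))]
  mul_add p r s := by
    have hpow : ∀ t : ℝ, q ^ (-t / 2) = (q ^ (t / 2))⁻¹ := fun t => by
      rw [neg_div, Real.rpow_neg hq.le]
    have hadd : ∀ t t' : ℝ, q ^ ((t + t') / 2) = q ^ (t / 2) * q ^ (t' / 2) := fun t t' => by
      rw [add_div, Real.rpow_add hq]
    have hsub : ∀ t t' : ℝ, q ^ ((t - t') / 2) = q ^ (t / 2) * (q ^ (t' / 2))⁻¹ := by
      intro t t'
      rw [sub_eq_add_neg, hadd, hpow]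
    have hP := (Real.rpow_pos_of_pos hq (p / 2)).ne'
    have hR := (Real.rpow_pos_of_pos hq (r / 2)).ne'
    have hS := (Real.rpow_pos_of_pos hq (s / 2)).ne'
    simp only [qnum, hpow, hadd, hsub, div_mul_div_comm, ← add_div]
    congr 1
    field_simp
    ring

theorem qnum_ne_zero (hq0 : 0 < q) (hq1 : q ≠ 1) {u : ℝ} (hu : u ≠ 0) : qnum q u ≠ 0 := by
  have hnum : ∀ t : ℝ, t ≠ 0 → q ^ (t / 2) - q ^ (-t / 2) ≠ 0 := fun t ht h =>
    ht (by linarith [(Real.rpow_right_inj hq0 hq1).mp (sub_eq_zero.mp h)])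
  exact div_ne_zero (hnum u hu) (hnum 1 one_ne_zero)

theorem qnum_natCast_add_one_ne_zero (hq0 : 0 < q) (hq1 : q ≠ 1) (m : ℕ) :
    qnum q (m + 1) ≠ 0 :=
  qnum_ne_zero hq0 hq1 (by positivity)

end QNumber

theorem stmt_9 (q : ℝ) (hq0 : 0 < q) (hq1 : q ≠ 1) (n : ℕ) (a b α β s : ℝ)
    (hnz1 : qpoch q (a - b + 1) n ≠ 0)
    (hnz2 : qpoch q (β + 1) n * qpoch q (a + b + α + 1) n ≠ 0)
    (hnz3 : qpoch q (α + 1) n * qpoch q (-a - b + β + 1) n ≠ 0) :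
    (qpoch q (β + 1) n * qpoch q (a + b + α + 1) n *
        ∑ k ∈ Finset.range (n + 1),
          qpoch q (-(n : ℝ)) k * qpoch q (α + β + (n : ℝ) + 1) k * qpoch q (a - s) k *
              qpoch q (a + s + 1) k /
            (qpoch q 1 k * qpoch q (a - b + 1) k * qpoch q (β + 1) k *
              qpoch q (a + b + α + 1) k) =
      qpoch q (α + 1) n * qpoch q (-a - b + β + 1) n *
        ∑ k ∈ Finset.range (n + 1),
          qpoch q (-(n : ℝ)) k * qpoch q (α + β + (n : ℝ) + 1) k * qpoch q (-b - s) k *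
              qpoch q (-b + s + 1) k /
            (qpoch q 1 k * qpoch q (a - b + 1) k * qpoch q (α + 1) k *
              qpoch q (-a - b + β + 1) k)) ∧
    racahU q a b α β n s =
      qpoch q (a - b + 1) n * qpoch q (α + 1) n * qpoch q (-a - b + β + 1) n / qfact q n *
        ∑ k ∈ Finset.range (n + 1),
          qpoch q (-(n : ℝ)) k * qpoch q (α + β + (n : ℝ) + 1) k * qpoch q (-b - s) k *
              qpoch q (-b + s + 1) k /
            (qpoch q 1 k * qpoch q (a - b + 1) k * qpoch q (α + 1) k *
              qpoch q (-a - b + β + 1) k) := by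
  have key := searsSeries_transform (isSineLike_qnum hq0) (qnum_natCast_add_one_ne_zero hq0 hq1) n
    (w := α + β + n + 1) (x := a + s + 1) (y := a - s) (d := a - b + 1) (v := β + 1)
    (f := a + b + α + 1) (v' := α + 1) (f' := -a - b + β + 1) (by ring) (by ring) (by ring)
    hnz1 (left_ne_zero_of_mul hnz2) (right_ne_zero_of_mul hnz2) (left_ne_zero_of_mul hnz3)
    (right_ne_zero_of_mul hnz3)
  rw [searsSeries_comm (x := a + s + 1), show a - b + 1 - (a + s + 1) = -b - s by ring,
    show a - b + 1 - (a - s) = -b + s + 1 by ring] at key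
  refine ⟨key, ?_⟩
  simp only [racahU, qpoch_eq_poch_qnum, searsSeries] at key ⊢
  linear_combination (poch (qnum q) (a - b + 1) n / qfact q n) * key
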